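/- Every trace in an infinite play of the satisfiability game G_θ is finitely spawning, and is either an A-trace or an E-trace. -/

import Mathlib

/-! The quantifier depth of a block (the maximal nesting of path quantifiers in its formulas)
never increases along a block connection, and it drops strictly whenever the connection is
spawning or changes the path quantifier of the block. Along a trace it is therefore eventually
constant, and from then on no connection is spawning and the quantifier stays fixed. -/


/-- Branching-time formulas in negation normal form. -/
inductive Form : Type where
  | tt : Form
  | ff : Form
  | prop : ℕ → Form
  | nprop : ℕ → Form
  | or : Form → Form → Form
  | and : Form → Form → Form
  | next : Form → Form
  | unt : Form → Form → Form
  | rel : Form → Form → Form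
  | ex : Form → Form
  | al : Form → Form
deriving DecidableEq

namespace Form

/-- The set of subformulas of a formula. -/
def subf : Form → Finset Form
  | .tt => {.tt}
  | .ff => {.ff}
  | .prop p => {.prop p}
  | .nprop p => {.nprop p}
  | .or a b => insert (.or a b) (a.subf ∪ b.subf)
  | .and a b => insert (.and a b) (a.subf ∪ b.subf)
  | .next a => insert (.next a) a.subf
  | .unt a b => insert (.unt a b) (a.subf ∪ b.subf)
  | .rel a b => insert (.rel a b) (a.subf ∪ b.subf)
  | .ex a => insert (.ex a) a.subf
  | .al a => insert (.al a) a.subf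

/-- Literals are `tt`, `ff`, `p` and `¬p`. -/
def IsLiteral : Form → Prop
  | .tt => True
  | .ff => True
  | .prop _ => True
  | .nprop _ => True
  | _ => False

/-- A formula of the form `Xφ`. -/
def IsNext : Form → Prop
  | .next _ => True
  | _ => False

/-- Remove a frontal `X`. -/
def unX : Form → Form
  | .next a => a
  | a => a

end Form

/-- The Fischer-Ladner closure of a formula: its subformulas together with
`X(φ U ψ)` for every subformula `φ U ψ` and `X(φ R ψ)` for every subformula `φ R ψ`. -/
def FL (θ : Form) : Finset Form :=
  θ.subf ∪ θ.subf.image (fun ψ =>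
    match ψ with
    | .unt a b => Form.next (.unt a b)
    | .rel a b => Form.next (.rel a b)
    | _ => θ)

/-- A (total) transition system with a designated initial state and a labeling
of states with sets of propositional constants. -/
structure TS (S : Type) where
  init : S
  step : S → S → Prop
  total : ∀ s, ∃ t, step s t
  label : S → Set ℕ

/-- An infinite path through a transition system. -/
structure TS.Path {S : Type} (T : TS S) where
  seq : ℕ → S
  valid : ∀ i, T.step (seq i) (seq (i + 1))

/-- The suffix `π^k` of a path `π`. -/
def TS.Path.suffix {S : Type} {T : TS S} (π : T.Path) (k : ℕ) : T.Path :=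
  ⟨fun i => π.seq (k + i), fun i => π.valid (k + i)⟩

/-- Satisfaction of a branching-time formula on a path of a transition system. -/
def Sat {S : Type} (T : TS S) : T.Path → Form → Prop
  | _, .tt => True
  | _, .ff => False
  | π, .prop p => p ∈ T.label (π.seq 0)
  | π, .nprop p => p ∉ T.label (π.seq 0)
  | π, .or a b => Sat T π a ∨ Sat T π b
  | π, .and a b => Sat T π a ∧ Sat T π b
  | π, .next a => Sat T (π.suffix 1) a
  | π, .unt a b => ∃ k, Sat T (π.suffix k) b ∧ ∀ j < k, Sat T (π.suffix j) a
  | π, .rel a b => ∀ k, Sat T (π.suffix k) b ∨ ∃ j < k, Sat T (π.suffix j) a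
  | π, .ex a => ∃ π' : T.Path, π'.seq 0 = π.seq 0 ∧ Sat T π' a
  | π, .al a => ∀ π' : T.Path, π'.seq 0 = π.seq 0 → Sat T π' a

/-- A state formula: satisfaction only depends on the first state of the path. -/
def IsStateForm (φ : Form) : Prop :=
  ∀ (S : Type) (T : TS S) (π π' : T.Path), π.seq 0 = π'.seq 0 → (Sat T π φ ↔ Sat T π' φ)

/-- A (state) formula is satisfiable if it holds at the initial state of some
transition system. -/
def Satisfiable (φ : Form) : Prop :=
  ∃ (S : Type) (T : TS S) (π : T.Path), π.seq 0 = T.init ∧ Sat T π φ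

/-- Equivalence of branching-time formulas. -/
def FormEquiv (φ ψ : Form) : Prop :=
  ∀ (S : Type) (T : TS S) (π : T.Path), Sat T π φ ↔ Sat T π ψ

/-- Path quantifiers. -/
inductive Quant : Type where
  | A : Quant
  | E : Quant
deriving DecidableEq

/-- Apply a path quantifier to a formula. -/
def Quant.apply : Quant → Form → Form
  | .A, φ => .al φ
  | .E, φ => .ex φ

/-- A quantifier-bound block `AΣ` or `EΠ`. -/
structure Block : Type where
  q : Quant
  fs : Finset Form
deriving DecidableEq

/-- Remove the frontal `X` from each formula of a block. -/
def Block.unX (b : Block) : Block := ⟨b.q, b.fs.image Form.unX⟩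

/-- A configuration: a set of quantifier-bound blocks together with a set of literals. -/
structure Config : Type where
  blocks : Finset Block
  lits : Finset Form
deriving DecidableEq

def Config.addBlock (C : Config) (b : Block) : Config := ⟨insert b C.blocks, C.lits⟩

def Config.addLit (C : Config) (l : Form) : Config := ⟨C.blocks, insert l C.lits⟩

/-- A well-formed configuration for `θ`: nonempty, all block formulas are taken from
the Fischer-Ladner closure of `θ` and the literal part consists of literals from it. -/
def Config.Wf (θ : Form) (C : Config) : Prop :=
  (C.blocks.Nonempty ∨ C.lits.Nonempty) ∧
  (∀ b ∈ C.blocks, b.fs ⊆ FL θ) ∧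
  (∀ l ∈ C.lits, l.IsLiteral ∧ l ∈ FL θ)

/-- Consistency: neither `ff` nor a complementary pair of literals occurs. -/
def Config.Consistent (C : Config) : Prop :=
  Form.ff ∉ C.lits ∧ ∀ p : ℕ, ¬ (Form.prop p ∈ C.lits ∧ Form.nprop p ∈ C.lits)

/-- The initial configuration `E{θ}`. -/
def Config.initial (θ : Form) : Config := ⟨{⟨Quant.E, {θ}⟩}, ∅⟩

/-- An instance of a rule application of the satisfiability game.  Each constructor
records the principal data, the choice of successor (for branching rules), and the
remainder `Φ` of the configuration which is copied unchanged. -/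
inductive RuleApp : Type where
  | aand (a b : Form) (Γ : Finset Form) (Φ : Config) (h : Form.and a b ∉ Γ)
  | aor (a b : Form) (Γ : Finset Form) (Φ : Config) (h : Form.or a b ∉ Γ)
  | alit (l : Form) (Γ : Finset Form) (Φ : Config) (hl : l.IsLiteral) (h : l ∉ Γ) (c : Bool)
  | au (a b : Form) (Γ : Finset Form) (Φ : Config) (h : Form.unt a b ∉ Γ)
  | ar (a b : Form) (Γ : Finset Form) (Φ : Config) (h : Form.rel a b ∉ Γ)
  | aa (a : Form) (Γ : Finset Form) (Φ : Config) (h : Form.al a ∉ Γ) (c : Bool)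
  | ae (a : Form) (Γ : Finset Form) (Φ : Config) (h : Form.ex a ∉ Γ) (c : Bool)
  | ett (Φ : Config)
  | eor (a b : Form) (Γ : Finset Form) (Φ : Config) (h : Form.or a b ∉ Γ) (c : Bool)
  | eand (a b : Form) (Γ : Finset Form) (Φ : Config) (h : Form.and a b ∉ Γ)
  | elit (l : Form) (Γ : Finset Form) (Φ : Config) (hl : l.IsLiteral) (h : l ∉ Γ)
  | eu (a b : Form) (Γ : Finset Form) (Φ : Config) (h : Form.unt a b ∉ Γ) (c : Bool)
  | ee (a : Form) (Γ : Finset Form) (Φ : Config) (h : Form.ex a ∉ Γ)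
  | er (a b : Form) (Γ : Finset Form) (Φ : Config) (h : Form.rel a b ∉ Γ) (c : Bool)
  | ea (a : Form) (Γ : Finset Form) (Φ : Config) (h : Form.al a ∉ Γ)
  | x0 (C : Config) (h : ∀ b ∈ C.blocks, b.q = Quant.A ∧ ∀ f ∈ b.fs, f.IsNext)
       (hne : C.blocks.Nonempty)
  | x1 (C : Config) (b0 : Block) (hb0 : b0 ∈ C.blocks ∧ b0.q = Quant.E)
       (h : ∀ b ∈ C.blocks, ∀ f ∈ b.fs, f.IsNext)

namespace RuleApp

/-- The configuration a rule application is applied to. -/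
def src : RuleApp → Config
  | .aand a b Γ Φ _ => Φ.addBlock ⟨Quant.A, insert (.and a b) Γ⟩
  | .aor a b Γ Φ _ => Φ.addBlock ⟨Quant.A, insert (.or a b) Γ⟩
  | .alit l Γ Φ _ _ _ => Φ.addBlock ⟨Quant.A, insert l Γ⟩
  | .au a b Γ Φ _ => Φ.addBlock ⟨Quant.A, insert (.unt a b) Γ⟩
  | .ar a b Γ Φ _ => Φ.addBlock ⟨Quant.A, insert (.rel a b) Γ⟩
  | .aa a Γ Φ _ _ => Φ.addBlock ⟨Quant.A, insert (.al a) Γ⟩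
  | .ae a Γ Φ _ _ => Φ.addBlock ⟨Quant.A, insert (.ex a) Γ⟩
  | .ett Φ => Φ.addBlock ⟨Quant.E, {Form.tt}⟩
  | .eor a b Γ Φ _ _ => Φ.addBlock ⟨Quant.E, insert (.or a b) Γ⟩
  | .eand a b Γ Φ _ => Φ.addBlock ⟨Quant.E, insert (.and a b) Γ⟩
  | .elit l Γ Φ _ _ => Φ.addBlock ⟨Quant.E, insert l Γ⟩
  | .eu a b Γ Φ _ _ => Φ.addBlock ⟨Quant.E, insert (.unt a b) Γ⟩
  | .ee a Γ Φ _ => Φ.addBlock ⟨Quant.E, insert (.ex a) Γ⟩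
  | .er a b Γ Φ _ _ => Φ.addBlock ⟨Quant.E, insert (.rel a b) Γ⟩
  | .ea a Γ Φ _ => Φ.addBlock ⟨Quant.E, insert (.al a) Γ⟩
  | .x0 C _ _ => C
  | .x1 C _ _ _ => C

/-- The chosen successor configuration of a rule application. -/
def tgt : RuleApp → Config
  | .aand a b Γ Φ _ => (Φ.addBlock ⟨Quant.A, insert a Γ⟩).addBlock ⟨Quant.A, insert b Γ⟩
  | .aor a b Γ Φ _ => Φ.addBlock ⟨Quant.A, insert a (insert b Γ)⟩
  | .alit l Γ Φ _ _ c => if c then Φ.addBlock ⟨Quant.A, Γ⟩ else Φ.addLit l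
  | .au a b Γ Φ _ =>
      (Φ.addBlock ⟨Quant.A, insert b (insert a Γ)⟩).addBlock
        ⟨Quant.A, insert b (insert (.next (.unt a b)) Γ)⟩
  | .ar a b Γ Φ _ =>
      (Φ.addBlock ⟨Quant.A, insert b Γ⟩).addBlock
        ⟨Quant.A, insert a (insert (.next (.rel a b)) Γ)⟩
  | .aa a Γ Φ _ c => if c then Φ.addBlock ⟨Quant.A, Γ⟩ else Φ.addBlock ⟨Quant.A, {a}⟩
  | .ae a Γ Φ _ c => if c then Φ.addBlock ⟨Quant.A, Γ⟩ else Φ.addBlock ⟨Quant.E, {a}⟩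
  | .ett Φ => Φ
  | .eor a b Γ Φ _ c =>
      if c then Φ.addBlock ⟨Quant.E, insert b Γ⟩ else Φ.addBlock ⟨Quant.E, insert a Γ⟩
  | .eand a b Γ Φ _ => Φ.addBlock ⟨Quant.E, insert a (insert b Γ)⟩
  | .elit l Γ Φ _ _ => (Φ.addBlock ⟨Quant.E, Γ⟩).addLit l
  | .eu a b Γ Φ _ c =>
      if c then Φ.addBlock ⟨Quant.E, insert a (insert (.next (.unt a b)) Γ)⟩
      else Φ.addBlock ⟨Quant.E, insert b Γ⟩
  | .ee a Γ Φ _ => (Φ.addBlock ⟨Quant.E, {a}⟩).addBlock ⟨Quant.E, Γ⟩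
  | .er a b Γ Φ _ c =>
      if c then Φ.addBlock ⟨Quant.E, insert b (insert (.next (.rel a b)) Γ)⟩
      else Φ.addBlock ⟨Quant.E, insert b (insert a Γ)⟩
  | .ea a Γ Φ _ => (Φ.addBlock ⟨Quant.A, {a}⟩).addBlock ⟨Quant.E, Γ⟩
  | .x0 C _ _ => ⟨C.blocks.image Block.unX, ∅⟩
  | .x1 C b0 _ _ =>
      ⟨insert b0.unX ((C.blocks.filter (fun b => b.q = Quant.A)).image Block.unX), ∅⟩

/-- Is this an application of one of the modal rules `(X0)` or `(X1)`? -/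
def IsModal : RuleApp → Prop
  | .x0 _ _ _ => True
  | .x1 _ _ _ _ => True
  | _ => False

/-- Is this an application of rule `(X1)`? -/
def IsX1 : RuleApp → Prop
  | .x1 _ _ _ _ => True
  | _ => False

/-- For a non-modal rule application: the remainder `Φ`, the principal block, the
principal formula, and the set of descendant blocks each together with the set of
descendants of the principal formula in it. -/
def nonModalData? : RuleApp → Option (Config × Block × Form × Set (Block × Set Form))
  | .aand a b Γ Φ _ =>
      some (Φ, ⟨Quant.A, insert (.and a b) Γ⟩, .and a b,
        {(⟨Quant.A, insert a Γ⟩, {a}), (⟨Quant.A, insert b Γ⟩, {b})})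
  | .aor a b Γ Φ _ =>
      some (Φ, ⟨Quant.A, insert (.or a b) Γ⟩, .or a b,
        {(⟨Quant.A, insert a (insert b Γ)⟩, {a, b})})
  | .alit l Γ Φ _ _ c =>
      some (Φ, ⟨Quant.A, insert l Γ⟩, l,
        if c then {(⟨Quant.A, Γ⟩, ∅)} else ∅)
  | .au a b Γ Φ _ =>
      some (Φ, ⟨Quant.A, insert (.unt a b) Γ⟩, .unt a b,
        {(⟨Quant.A, insert b (insert a Γ)⟩, {b, a}),
         (⟨Quant.A, insert b (insert (.next (.unt a b)) Γ)⟩, {b, .next (.unt a b)})})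
  | .ar a b Γ Φ _ =>
      some (Φ, ⟨Quant.A, insert (.rel a b) Γ⟩, .rel a b,
        {(⟨Quant.A, insert b Γ⟩, {b}),
         (⟨Quant.A, insert a (insert (.next (.rel a b)) Γ)⟩, {a, .next (.rel a b)})})
  | .aa a Γ Φ _ c =>
      some (Φ, ⟨Quant.A, insert (.al a) Γ⟩, .al a,
        if c then {(⟨Quant.A, Γ⟩, ∅)} else {(⟨Quant.A, ({a} : Finset Form)⟩, {a})})
  | .ae a Γ Φ _ c =>
      some (Φ, ⟨Quant.A, insert (.ex a) Γ⟩, .ex a,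
        if c then {(⟨Quant.A, Γ⟩, ∅)} else {(⟨Quant.E, ({a} : Finset Form)⟩, {a})})
  | .ett Φ => some (Φ, ⟨Quant.E, {Form.tt}⟩, .tt, ∅)
  | .eor a b Γ Φ _ c =>
      some (Φ, ⟨Quant.E, insert (.or a b) Γ⟩, .or a b,
        if c then {(⟨Quant.E, insert b Γ⟩, {b})} else {(⟨Quant.E, insert a Γ⟩, {a})})
  | .eand a b Γ Φ _ =>
      some (Φ, ⟨Quant.E, insert (.and a b) Γ⟩, .and a b,
        {(⟨Quant.E, insert a (insert b Γ)⟩, {a, b})})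
  | .elit l Γ Φ _ _ =>
      some (Φ, ⟨Quant.E, insert l Γ⟩, l, {(⟨Quant.E, Γ⟩, ∅)})
  | .eu a b Γ Φ _ c =>
      some (Φ, ⟨Quant.E, insert (.unt a b) Γ⟩, .unt a b,
        if c then {(⟨Quant.E, insert a (insert (.next (.unt a b)) Γ)⟩, {a, .next (.unt a b)})}
        else {(⟨Quant.E, insert b Γ⟩, {b})})
  | .ee a Γ Φ _ =>
      some (Φ, ⟨Quant.E, insert (.ex a) Γ⟩, .ex a,
        {(⟨Quant.E, ({a} : Finset Form)⟩, {a}), (⟨Quant.E, Γ⟩, ∅)})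
  | .er a b Γ Φ _ c =>
      some (Φ, ⟨Quant.E, insert (.rel a b) Γ⟩, .rel a b,
        if c then {(⟨Quant.E, insert b (insert (.next (.rel a b)) Γ)⟩, {b, .next (.rel a b)})}
        else {(⟨Quant.E, insert b (insert a Γ)⟩, {b, a})})
  | .ea a Γ Φ _ =>
      some (Φ, ⟨Quant.E, insert (.al a) Γ⟩, .al a,
        {(⟨Quant.A, ({a} : Finset Form)⟩, {a}), (⟨Quant.E, Γ⟩, ∅)})
  | .x0 _ _ _ => none
  | .x1 _ _ _ _ => none

/-- The principal block and principal formula of a non-modal rule application. -/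
def principal? (r : RuleApp) : Option (Block × Form) :=
  r.nonModalData?.map (fun d => (d.2.1, d.2.2.1))

end RuleApp

/-- Copy-or-descendant scheme for block connections of non-modal rules. -/
def BlockCopyDesc (Φ : Config) (P : Block) (D : Set Block) (b b' : Block) : Prop :=
  (b ∈ Φ.blocks ∧ b' = b) ∨ (b = P ∧ b' ∈ D)

/-- Copy-or-descendant scheme for formula connections of non-modal rules. -/
def FormCopyDesc (Φ : Config) (P : Block) (princ : Form) (D : Set (Block × Set Form))
    (b b' : Block) (f f' : Form) : Prop :=
  (b ∈ Φ.blocks ∧ b' = b ∧ f ∈ b.fs ∧ f' = f) ∨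
  (b = P ∧ ∃ d ∈ D, b' = d.1 ∧
    ((f = princ ∧ f' ∈ d.2) ∨ (f ∈ P.fs ∧ f ≠ princ ∧ f' = f ∧ f ∈ d.1.fs)))

namespace RuleApp

/-- The connection relation `(C,QΔ) ⤳ (C',Q'Δ')` on blocks induced by a rule application. -/
def BlockConn (r : RuleApp) (b b' : Block) : Prop :=
  match r with
  | .x0 C _ _ => b ∈ C.blocks ∧ b' = b.unX
  | .x1 C b0 _ _ =>
      b ∈ C.blocks ∧ ((b.q = Quant.A ∧ b' = b.unX) ∨ (b = b0 ∧ b' = b0.unX))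
  | r =>
      match r.nonModalData? with
      | some (Φ, P, _, D) => BlockCopyDesc Φ P (Prod.fst '' D) b b'
      | none => False

/-- The connection relation `(C,QΔ,ψ) ⤳ (C',Q'Δ',ψ')` on formulas inside blocks
induced by a rule application. -/
def FormConn (r : RuleApp) (b b' : Block) (f f' : Form) : Prop :=
  match r with
  | .x0 C _ _ => b ∈ C.blocks ∧ b' = b.unX ∧ f ∈ b.fs ∧ f = .next f'
  | .x1 C b0 _ _ =>
      b ∈ C.blocks ∧ (b.q = Quant.A ∨ b = b0) ∧ b' = b.unX ∧ f ∈ b.fs ∧ f = .next f'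
  | r =>
      match r.nonModalData? with
      | some (Φ, P, princ, D) => FormCopyDesc Φ P princ D b b' f f'
      | none => False

/-- A spawning block connection: the principal formula is `Q'ψ`, and the descendant
block is `Q'{ψ}`. -/
def Spawning (r : RuleApp) (b b' : Block) : Prop :=
  r.BlockConn b b' ∧ ∃ ψ : Form, b'.fs = {ψ} ∧ r.principal? = some (b, b'.q.apply ψ)

end RuleApp

/-- A move of the satisfiability game for `θ`: some rule application leads from `C`
to `C'`, and `C'` is again a (consistent, well-formed) configuration. -/
def Move (θ : Form) (C C' : Config) : Prop :=
  ∃ r : RuleApp, r.src = C ∧ r.tgt = C' ∧ C'.Wf θ ∧ C'.Consistent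

/-- Player 1 owns exactly the configurations to which rule `(X1)` applies. -/
def Config.Owner1 (C : Config) : Prop := ∃ r : RuleApp, r.src = C ∧ r.IsX1

/-- Player 0 owns all other configurations. -/
def Config.Owner0 (C : Config) : Prop := ¬ C.Owner1

/-- An infinite play of the satisfiability game for `θ`. -/
def IsInfPlay (θ : Form) (cfg : ℕ → Config) : Prop :=
  cfg 0 = Config.initial θ ∧ ∀ i, Move θ (cfg i) (cfg (i + 1))

/-- Blocks `b` of `C` and `b'` of `C'` are connected by some rule application from `C` to `C'`. -/
def BlockConnRel (C C' : Config) (b b' : Block) : Prop :=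
  ∃ r : RuleApp, r.src = C ∧ r.tgt = C' ∧ r.BlockConn b b'

/-- Formulas `f` in block `b` of `C` and `f'` in block `b'` of `C'` are connected by
some rule application from `C` to `C'`. -/
def FormConnRel (C C' : Config) (b b' : Block) (f f' : Form) : Prop :=
  ∃ r : RuleApp, r.src = C ∧ r.tgt = C' ∧ r.FormConn b b' f f'

/-- The block connection between `b` in `C` and `b'` in `C'` is spawning. -/
def SpawnRel (C C' : Config) (b b' : Block) : Prop :=
  ∃ r : RuleApp, r.src = C ∧ r.tgt = C' ∧ r.Spawning b b'

/-- A trace in an infinite play: an infinite sequence of connected blocks. -/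
def IsTrace (cfg : ℕ → Config) (blk : ℕ → Block) : Prop :=
  (∀ i, blk i ∈ (cfg i).blocks) ∧
  ∀ i, BlockConnRel (cfg i) (cfg (i + 1)) (blk i) (blk (i + 1))

/-- An `E`-trace: eventually all blocks are `E`-blocks. -/
def IsETrace (blk : ℕ → Block) : Prop := ∃ i, ∀ j, i ≤ j → (blk j).q = Quant.E

/-- An `A`-trace: eventually all blocks are `A`-blocks. -/
def IsATrace (blk : ℕ → Block) : Prop := ∃ i, ∀ j, i ≤ j → (blk j).q = Quant.A

/-- A thread in a trace of an infinite play: an infinite sequence of connected formulas. -/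
def IsThread (cfg : ℕ → Config) (blk : ℕ → Block) (f : ℕ → Form) : Prop :=
  (∀ i, f i ∈ (blk i).fs) ∧
  ∀ i, FormConnRel (cfg i) (cfg (i + 1)) (blk i) (blk (i + 1)) (f i) (f (i + 1))

/-- A `U`-thread: some formula `φ U ψ ∈ FL(θ)` occurs at infinitely many positions. -/
def IsUThread (θ : Form) (f : ℕ → Form) : Prop :=
  ∃ a b : Form, Form.unt a b ∈ FL θ ∧ {j | f j = Form.unt a b}.Infinite

/-- An `R`-thread: some formula `φ R ψ ∈ FL(θ)` occurs at infinitely many positions. -/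
def IsRThread (θ : Form) (f : ℕ → Form) : Prop :=
  ∃ a b : Form, Form.rel a b ∈ FL θ ∧ {j | f j = Form.rel a b}.Infinite

/-- A bad trace: an `E`-trace containing a `U`-thread or an `A`-trace containing
no `R`-thread. -/
def BadTrace (θ : Form) (cfg : ℕ → Config) (blk : ℕ → Block) : Prop :=
  (IsETrace blk ∧ ∃ f, IsThread cfg blk f ∧ IsUThread θ f) ∨
  (IsATrace blk ∧ ¬ ∃ f, IsThread cfg blk f ∧ IsRThread θ f)

/-- A prefix of a play: a finite sequence of configurations starting at the initial
configuration following the game rules. -/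
def PlayPrefix (θ : Form) (l : List Config) : Prop :=
  l.head? = some (Config.initial θ) ∧ l.Chain' (Move θ)

/-- A maximal finite play: its last configuration has no successor. -/
def FinMaxPlay (θ : Form) (l : List Config) : Prop :=
  PlayPrefix θ l ∧ ∀ C, l.getLast? = some C → ¬ ∃ C', Move θ C C'

/-- Player 0 wins a finite play iff it ends in a consistent set of literals, or in a
dead end owned by player 1. -/
def Player0WinsFin (l : List Config) : Prop :=
  ∃ C : Config, l.getLast? = some C ∧ ((C.blocks = ∅ ∧ C.Consistent) ∨ C.Owner1)

/-- Player 0 wins an infinite play iff it contains no bad trace. -/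
def Player0WinsInf (θ : Form) (cfg : ℕ → Config) : Prop :=
  ¬ ∃ blk : ℕ → Block, IsTrace cfg blk ∧ BadTrace θ cfg blk

/-- A strategy for player 0: it selects, for every play prefix ending in a
configuration owned by player 0 that has successors, one successor. -/
structure Strategy (θ : Form) where
  move : List Config → Config
  legal : ∀ (l : List Config) (C : Config), PlayPrefix θ l → l.getLast? = some C →
    C.Owner0 → (∃ C', Move θ C C') → Move θ C (move l)

/-- A finite play conforms to a strategy for player 0. -/
def ConformsList (θ : Form) (σ : Strategy θ) (l : List Config) : Prop :=
  ∀ (i : ℕ) (C C' : Config), l[i]? = some C → l[i+1]? = some C' → C.Owner0 →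
    C' = σ.move (l.take (i + 1))

/-- An infinite play conforms to a strategy for player 0. -/
def ConformsInf (θ : Form) (σ : Strategy θ) (cfg : ℕ → Config) : Prop :=
  ∀ i, (cfg i).Owner0 → cfg (i + 1) = σ.move ((List.range (i + 1)).map cfg)

/-- A winning strategy for player 0: every maximal play conforming to it is won by
player 0. -/
def Strategy.Winning {θ : Form} (σ : Strategy θ) : Prop :=
  (∀ l : List Config, FinMaxPlay θ l → ConformsList θ σ l → Player0WinsFin l) ∧
  (∀ cfg : ℕ → Config, IsInfPlay θ cfg → ConformsInf θ σ cfg → Player0WinsInf θ cfg)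

def Form.quantDepth : Form → ℕ
  | .or a b | .and a b | .unt a b | .rel a b => max a.quantDepth b.quantDepth
  | .next a => a.quantDepth
  | .ex a | .al a => a.quantDepth + 1
  | _ => 0

def Block.quantDepth (b : Block) : ℕ := b.fs.sup Form.quantDepth

@[simp]
lemma Form.quantDepth_unX (f : Form) : f.unX.quantDepth = f.quantDepth := by
  cases f <;> rfl

@[simp]
lemma Quant.quantDepth_apply (q : Quant) (f : Form) :
    (q.apply f).quantDepth = f.quantDepth + 1 := by
  cases q <;> rfl

@[simp]
lemma Block.quantDepth_unX (b : Block) : b.unX.quantDepth = b.quantDepth := by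
  simp [Block.quantDepth, Block.unX, Finset.sup_image, Function.comp_def]

namespace RuleApp

lemma quantDepth_of_mem_descendants {r : RuleApp} {Φ : Config} {P : Block} {φ : Form}
    {D : Set (Block × Set Form)} (hr : r.nonModalData? = some (Φ, P, φ, D))
    {d : Block × Set Form} (hd : d ∈ D) :
    d.1.quantDepth ≤ P.quantDepth ∧ (d.1.q = P.q ∨ d.1.quantDepth < P.quantDepth) := by
  -- A descendant consists of formulas of `P` and immediate subformulas of `φ` (or `X φ`),
  -- except for a spawned block `Q{ψ}`, whose depth is that of `Qψ ∈ P` minus one.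
  cases r <;> simp only [nonModalData?, Option.some.injEq, Prod.mk.injEq, reduceCtorEq] at hr <;>
    obtain ⟨rfl, rfl, rfl, rfl⟩ := hr <;> (try split_ifs at hd) <;>
    simp only [Set.mem_insert_iff, Set.mem_singleton_iff, Set.mem_empty_iff_false] at hd <;>
    (try rcases hd with rfl | rfl) <;>
    simp only [Block.quantDepth, Form.quantDepth, Finset.sup_insert, Finset.sup_singleton,
      true_or, and_true] <;> omega

lemma blockCopyDesc_of_blockConn {r : RuleApp} {Φ : Config} {P : Block} {φ : Form}
    {D : Set (Block × Set Form)} (hr : r.nonModalData? = some (Φ, P, φ, D)) {b b' : Block}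
    (h : r.BlockConn b b') : BlockCopyDesc Φ P (Prod.fst '' D) b b' := by
  cases r <;> first | (simp only [BlockConn, hr] at h; exact h) | simp [nonModalData?] at hr

lemma BlockConn.quantDepth_le {r : RuleApp} {b b' : Block} (h : r.BlockConn b b') :
    b'.quantDepth ≤ b.quantDepth ∧ (b'.q = b.q ∨ b'.quantDepth < b.quantDepth) := by
  cases hr : r.nonModalData? with
  | none =>
    have hunX : b' = b.unX := by
      cases r <;> simp only [nonModalData?, reduceCtorEq] at hr
      · exact h.2
      · obtain ⟨-, ⟨-, rfl⟩ | ⟨rfl, rfl⟩⟩ := h <;> rfl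
    subst hunX
    exact ⟨(Block.quantDepth_unX b).le, Or.inl rfl⟩
  | some data =>
    obtain ⟨Φ, P, φ, D⟩ := data
    rcases blockCopyDesc_of_blockConn hr h with ⟨-, rfl⟩ | ⟨rfl, d, hd, rfl⟩
    · exact ⟨le_rfl, Or.inl rfl⟩
    · exact quantDepth_of_mem_descendants hr hd

lemma mem_fs_of_principal?_eq_some {r : RuleApp} {b : Block} {φ : Form}
    (h : r.principal? = some (b, φ)) : φ ∈ b.fs := by
  cases r <;>
    simp only [principal?, nonModalData?, Option.map_some, Option.map_none,
      Option.some.injEq, Prod.mk.injEq, reduceCtorEq] at h <;>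
    obtain ⟨rfl, rfl⟩ := h <;>
    simp

lemma Spawning.quantDepth_lt {r : RuleApp} {b b' : Block} (h : r.Spawning b b') :
    b'.quantDepth < b.quantDepth := by
  obtain ⟨-, ψ, hfs, hprinc⟩ := h
  calc b'.quantDepth = ψ.quantDepth := by rw [Block.quantDepth, hfs, Finset.sup_singleton]
    _ < (b'.q.apply ψ).quantDepth := by simp
    _ ≤ b.quantDepth := Finset.le_sup (mem_fs_of_principal?_eq_some hprinc)

end RuleApp

theorem every_trace_finitely_spawning_and_A_or_E_general
    (cfg : ℕ → Config) (blk : ℕ → Block) (htrace : IsTrace cfg blk) :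
    {i : ℕ | SpawnRel (cfg i) (cfg (i + 1)) (blk i) (blk (i + 1))}.Finite ∧
    (IsATrace blk ∨ IsETrace blk) := by
  have hconn (i : ℕ) : (blk (i + 1)).quantDepth ≤ (blk i).quantDepth ∧
      ((blk (i + 1)).q = (blk i).q ∨ (blk (i + 1)).quantDepth < (blk i).quantDepth) := by
    obtain ⟨r, -, -, h⟩ := htrace.2 i
    exact h.quantDepth_le
  obtain ⟨N, hN⟩ := WellFoundedLT.antitone_chain_condition
    (antitone_nat_of_succ_le (f := fun n => (blk n).quantDepth) fun i => (hconn i).1)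
  have hstable (n : ℕ) (hn : N ≤ n) : (blk (n + 1)).quantDepth = (blk n).quantDepth :=
    (hN (n + 1) (by omega)).symm.trans (hN n hn)
  have hq : ∀ n ≥ N, (blk n).q = (blk N).q :=
    Nat.le_induction rfl fun n hn ih =>
      ((hconn n).2.resolve_right (hstable n hn).not_lt).trans ih
  refine ⟨(Set.finite_Iio N).subset fun i ⟨_, _, _, hs⟩ =>
    not_le.mp fun hi => hs.quantDepth_lt.ne (hstable i hi), ?_⟩
  cases hQ : (blk N).q
  · exact Or.inl ⟨N, fun j hj => (hq j hj).trans hQ⟩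
  · exact Or.inr ⟨N, fun j hj => (hq j hj).trans hQ⟩

/-- **Lemma.** Every trace in an infinite play of the satisfiability game `G_θ`
is finitely spawning, and is either an `A`-trace or an `E`-trace. -/
theorem every_trace_finitely_spawning_and_A_or_E (θ : Form) (hθ : IsStateForm θ)
    (cfg : ℕ → Config) (hplay : IsInfPlay θ cfg)
    (blk : ℕ → Block) (htrace : IsTrace cfg blk) :
    {i : ℕ | SpawnRel (cfg i) (cfg (i + 1)) (blk i) (blk (i + 1))}.Finite ∧
    (IsATrace blk ∨ IsETrace blk) :=
  every_trace_finitely_spawning_and_A_or_E_general cfg blk htrace
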